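/- Let M ∈ ℝ^{k×d} full row rank, M† its pseudoinverse, P̂ ∈ ℝ^{k×S} with nonnegative entries and row sums 1, and for each state i a matrix Φᵢ with ‖Φᵢ M†‖_∞ < 1/γ for 0 ≤ γ < 1. Define T: ℝ^k → ℝ^k by (T x) = R + γ P̂ v(x) where v(x)ᵢ = ‖Φᵢ M† x‖_∞. Then T is a contraction in the sup norm with modulus γ · maxᵢ ‖Φᵢ M†‖_∞ < 1, and hence has a unique fixed point q̂* ∈ ℝ^k. -/

import Mathlib

open Matrix

noncomputable def pinv {k d : ℕ} (M : Matrix (Fin k) (Fin d) ℝ) : Matrix (Fin d) (Fin k) ℝ :=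
  Mᵀ * (M * Mᵀ)⁻¹

noncomputable def rowSumNorm {m n : Type*} [Fintype m] [Fintype n]
    (A : Matrix m n ℝ) : ℝ :=
  ⨆ i, ∑ j, |A i j|

noncomputable def supNorm {n : Type*} [Fintype n] (x : n → ℝ) : ℝ := ⨆ i, |x i|

/-!
By the reverse triangle inequality, `x ↦ (‖Φᵢ M† x‖_∞)ᵢ` is Lipschitz with constant
`L = maxᵢ ‖Φᵢ M†‖_∞`; a row-stochastic `P̂` does not increase the sup norm, so
`x ↦ R + γ P̂ v(x)` is `γ L`-Lipschitz with `γ L < 1`, and Banach's fixed point theorem applies.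
-/

lemma supNorm_eq_norm {n : Type*} [Fintype n] (x : n → ℝ) : supNorm x = ‖x‖ := by
  simp only [supNorm, ← Real.norm_eq_abs]
  refine le_antisymm (Real.iSup_le (norm_le_pi_norm x) (norm_nonneg x)) ?_
  exact (pi_norm_le_iff_of_nonneg (Real.iSup_nonneg fun i => norm_nonneg (x i))).2
    fun i => le_ciSup (f := fun i => ‖x i‖) (Finite.bddAbove_range _) i

section RowSumNorm

variable {m n : Type*} [Fintype m] [Fintype n]

lemma rowSumNorm_nonneg (A : Matrix m n ℝ) : 0 ≤ rowSumNorm A :=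
  Real.iSup_nonneg fun _ => Finset.sum_nonneg fun _ _ => abs_nonneg _

lemma norm_mulVec_le_rowSumNorm_mul (A : Matrix m n ℝ) (x : n → ℝ) :
    ‖A *ᵥ x‖ ≤ rowSumNorm A * ‖x‖ := by
  refine (pi_norm_le_iff_of_nonneg (mul_nonneg (rowSumNorm_nonneg A) (norm_nonneg x))).2
    fun i => ?_
  calc ‖(A *ᵥ x) i‖ = |∑ j, A i j * x j| := rfl
    _ ≤ ∑ j, |A i j| * ‖x‖ := by
      refine (Finset.abs_sum_le_sum_abs _ _).trans (Finset.sum_le_sum fun j _ => ?_)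
      rw [abs_mul]
      exact mul_le_mul_of_nonneg_left (norm_le_pi_norm x j) (abs_nonneg _)
    _ = (∑ j, |A i j|) * ‖x‖ := (Finset.sum_mul ..).symm
    _ ≤ rowSumNorm A * ‖x‖ := by
      gcongr
      exact le_ciSup (f := fun i => ∑ j, |A i j|) (Finite.bddAbove_range _) i

lemma rowSumNorm_le_one_of_stochastic {P : Matrix m n ℝ} (hP0 : ∀ i j, 0 ≤ P i j)
    (hP1 : ∀ i, ∑ j, P i j = 1) : rowSumNorm P ≤ 1 :=
  Real.iSup_le (fun i => by simp only [abs_of_nonneg (hP0 i _), hP1 i, le_refl]) zero_le_one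

lemma norm_mulVec_le_of_stochastic {P : Matrix m n ℝ} (hP0 : ∀ i j, 0 ≤ P i j)
    (hP1 : ∀ i, ∑ j, P i j = 1) (z : n → ℝ) : ‖P *ᵥ z‖ ≤ ‖z‖ :=
  calc ‖P *ᵥ z‖ ≤ rowSumNorm P * ‖z‖ := norm_mulVec_le_rowSumNorm_mul P z
    _ ≤ ‖z‖ := mul_le_of_le_one_left (norm_nonneg z) (rowSumNorm_le_one_of_stochastic hP0 hP1)

end RowSumNorm

lemma norm_sub_norm_mulVec_le_iSup_rowSumNorm_mul {ι n : Type*} [Fintype ι] [Fintype n]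
    {m : ι → Type*} [∀ i, Fintype (m i)] (B : (i : ι) → Matrix (m i) n ℝ) (x y : n → ℝ) :
    ‖(fun i => ‖B i *ᵥ x‖) - fun i => ‖B i *ᵥ y‖‖ ≤ (⨆ i, rowSumNorm (B i)) * ‖x - y‖ := by
  have hL : 0 ≤ ⨆ i, rowSumNorm (B i) := Real.iSup_nonneg fun i => rowSumNorm_nonneg (B i)
  refine (pi_norm_le_iff_of_nonneg (mul_nonneg hL (norm_nonneg _))).2 fun i => ?_
  calc ‖‖B i *ᵥ x‖ - ‖B i *ᵥ y‖‖ ≤ ‖B i *ᵥ (x - y)‖ := by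
        rw [Real.norm_eq_abs, mulVec_sub]
        exact abs_norm_sub_norm_le _ _
    _ ≤ rowSumNorm (B i) * ‖x - y‖ := norm_mulVec_le_rowSumNorm_mul _ _
    _ ≤ (⨆ i, rowSumNorm (B i)) * ‖x - y‖ := by
      gcongr
      exact le_ciSup (f := fun i => rowSumNorm (B i)) (Finite.bddAbove_range _) i

lemma norm_target_sub_target_le {ι n m : Type*} [Fintype ι] [Fintype n] [Fintype m]
    {p : ι → Type*} [∀ i, Fintype (p i)] (R : m → ℝ) {γ : ℝ} (hγ : 0 ≤ γ) {P : Matrix m ι ℝ}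
    (hP0 : ∀ i j, 0 ≤ P i j) (hP1 : ∀ i, ∑ j, P i j = 1) (B : (i : ι) → Matrix (p i) n ℝ)
    (x y : n → ℝ) :
    ‖(R + γ • P *ᵥ fun i => ‖B i *ᵥ x‖) - (R + γ • P *ᵥ fun i => ‖B i *ᵥ y‖)‖ ≤
      (γ * ⨆ i, rowSumNorm (B i)) * ‖x - y‖ := by
  rw [add_sub_add_left_eq_sub, ← smul_sub, ← mulVec_sub, norm_smul, Real.norm_of_nonneg hγ,
    mul_assoc]
  gcongr
  exact (norm_mulVec_le_of_stochastic hP0 hP1 _).trans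
    (norm_sub_norm_mulVec_le_iSup_rowSumNorm_mul B x y)

lemma mul_ciSup_lt_of_forall_mul_lt {ι : Type*} [Finite ι] [Nonempty ι] {γ a : ℝ}
    {r : ι → ℝ} (h : ∀ i, γ * r i < a) : γ * ⨆ i, r i < a := by
  obtain ⟨i, hi⟩ := exists_eq_ciSup_of_finite (f := r)
  exact hi ▸ h i

lemma existsUnique_eq_of_norm_sub_le {E : Type*} [NormedAddCommGroup E] [CompleteSpace E]
    {f : E → E} {c : ℝ} (hc0 : 0 ≤ c) (hc1 : c < 1) (hf : ∀ x y, ‖f x - f y‖ ≤ c * ‖x - y‖) :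
    ∃! x, x = f x := by
  have hf' : ContractingWith ⟨c, hc0⟩ f :=
    ⟨hc1, LipschitzWith.of_dist_le_mul fun x y => by
      rw [dist_eq_norm, dist_eq_norm]
      exact hf x y⟩
  exact ⟨hf'.fixedPoint f, (hf'.fixedPoint_isFixedPt).symm,
    fun y hy => hf'.fixedPoint_unique hy.symm⟩

theorem stmt15_general {k d S : ℕ} [NeZero S] (M : Matrix (Fin k) (Fin d) ℝ)
    (Phat : Matrix (Fin k) (Fin S) ℝ)
    (hP0 : ∀ i j, 0 ≤ Phat i j) (hP1 : ∀ i, ∑ j, Phat i j = 1)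
    (a : Fin S → ℕ) (Φ : (i : Fin S) → Matrix (Fin (a i)) (Fin d) ℝ)
    (γ : ℝ) (hγ0 : 0 ≤ γ)
    (hΦ : ∀ i, γ * rowSumNorm (Φ i * pinv M) < 1)
    (R : Fin k → ℝ) :
    (γ * ⨆ i, rowSumNorm (Φ i * pinv M)) < 1 ∧
    (∀ x y : Fin k → ℝ,
      supNorm ((R + γ • Phat.mulVec fun i => supNorm ((Φ i * pinv M).mulVec x)) -
               (R + γ • Phat.mulVec fun i => supNorm ((Φ i * pinv M).mulVec y))) ≤
        (γ * ⨆ i, rowSumNorm (Φ i * pinv M)) * supNorm (x - y)) ∧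
    (∃! qhat : Fin k → ℝ,
      qhat = R + γ • Phat.mulVec fun i => supNorm ((Φ i * pinv M).mulVec qhat)) := by
  simp only [supNorm_eq_norm]
  have hcontraction := norm_target_sub_target_le R hγ0 hP0 hP1 fun i => Φ i * pinv M
  have hmodulus : γ * ⨆ i, rowSumNorm (Φ i * pinv M) < 1 := mul_ciSup_lt_of_forall_mul_lt hΦ
  refine ⟨hmodulus, hcontraction, existsUnique_eq_of_norm_sub_le ?_ hmodulus hcontraction⟩
  exact mul_nonneg hγ0 (Real.iSup_nonneg fun i => rowSumNorm_nonneg _)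

theorem stmt15 {k d S : ℕ} [NeZero S] (M : Matrix (Fin k) (Fin d) ℝ)
    (hM : IsUnit (M * Mᵀ))
    (Phat : Matrix (Fin k) (Fin S) ℝ)
    (hP0 : ∀ i j, 0 ≤ Phat i j) (hP1 : ∀ i, ∑ j, Phat i j = 1)
    (a : Fin S → ℕ) (Φ : (i : Fin S) → Matrix (Fin (a i)) (Fin d) ℝ)
    (γ : ℝ) (hγ0 : 0 ≤ γ) (hγ1 : γ < 1)
    (hΦ : ∀ i, γ * rowSumNorm (Φ i * pinv M) < 1)
    (R : Fin k → ℝ) :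
    (γ * ⨆ i, rowSumNorm (Φ i * pinv M)) < 1 ∧
    (∀ x y : Fin k → ℝ,
      supNorm ((R + γ • Phat.mulVec fun i => supNorm ((Φ i * pinv M).mulVec x)) -
               (R + γ • Phat.mulVec fun i => supNorm ((Φ i * pinv M).mulVec y))) ≤
        (γ * ⨆ i, rowSumNorm (Φ i * pinv M)) * supNorm (x - y)) ∧
    (∃! qhat : Fin k → ℝ,
      qhat = R + γ • Phat.mulVec fun i => supNorm ((Φ i * pinv M).mulVec qhat)) :=
  stmt15_general M Phat hP0 hP1 a Φ γ hγ0 hΦ R
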